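/- arXiv:2603.02530 — 7 statements merged into one kernel-verified Lean document; each statement's English description precedes it below -/
import Mathlib

section
/- With L(X,Y) = (-(X-1)² + Y(Y-X))/X, G(X,Y) = (X-Y)/X, and U₀(X,Y) = Y²/X, the identity L(X,Y) + G(X,Y)·U₀(X,Y) = -((X-1)²/X + (Y-X)²·Y/X²) holds for all X,Y > 0, and the right-hand side is strictly negative whenever (X,Y) ≠ (1,1). -/
theorem stmt_3 (X Y : ℝ) (hX : 0 < X) (hY : 0 < Y) :
    (-(X - 1)^2 + Y * (Y - X)) / X + ((X - Y) / X) * (Y^2 / X)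
      = -((X - 1)^2 / X + (Y - X)^2 * Y / X^2) ∧
    ((X, Y) ≠ ((1 : ℝ), (1 : ℝ)) →
      -((X - 1)^2 / X + (Y - X)^2 * Y / X^2) < 0) := by
  constructor
  · field_simp
    ring
  · intro hne
    have h1 : (X - 1)^2 / X ≥ 0 := div_nonneg (sq_nonneg _) hX.le
    have h2 : (Y - X)^2 * Y / X^2 ≥ 0 :=
      div_nonneg (mul_nonneg (sq_nonneg _) hY.le) (sq_nonneg _)
    have hpos : 0 < (X - 1)^2 / X + (Y - X)^2 * Y / X^2 := by
      rcases eq_or_ne X 1 with hX1 | hX1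
      · subst hX1
        have hY1 : Y ≠ 1 := by simpa using hne
        have hy : (0:ℝ) < (Y - 1)^2 := by
          have : Y - 1 ≠ 0 := sub_ne_zero.mpr hY1
          positivity
        have : 0 < (Y - 1)^2 * Y / 1^2 := by
          rw [one_pow, div_one]
          exact mul_pos hy hY
        nlinarith [this]
      · have : 0 < (X - 1)^2 / X := by
          have : (X - 1)^2 ≠ 0 := pow_ne_zero _ (sub_ne_zero.mpr hX1)
          positivity
        linarith
    linarith
end

section
/- Let Σ : (0,∞) → (0,∞) be strictly increasing with Σ(1) = 1, Σ(s) < s for 0 < s < 1, and Σ(s) > s for s > 1. Then for all X,Y > 0 with X ≠ Y, G(X,Y)·(Y·Σ(Y/X) - Y²/X) < 0, where G(X,Y) = (X-Y)/X; consequently, under the feedback U = Y·Σ(Y/X) the CLF derivative satisfies V̇ ≤ -q(X,Y) where q(X,Y) = (X-1)²/X + (Y-X)²·Y/X², with equality in the control perturbation term only when Y = X. -/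
open Set

theorem stmt_4 (Sig : ℝ → ℝ)
    (hpos : ∀ s, 0 < s → 0 < Sig s)
    (hmono : StrictMonoOn Sig (Set.Ioi (0 : ℝ)))
    (hone : Sig 1 = 1)
    (hlt : ∀ s, 0 < s → s < 1 → Sig s < s)
    (hgt : ∀ s, 1 < s → s < Sig s) :
    ∀ X Y : ℝ, 0 < X → 0 < Y →
      ((X ≠ Y → ((X - Y) / X) * (Y * Sig (Y / X) - Y^2 / X) < 0) ∧
       (-(X - 1)^2 + Y * (Y - X)) / X + ((X - Y) / X) * (Y * Sig (Y / X))
          ≤ -((X - 1)^2 / X + (Y - X)^2 * Y / X^2) ∧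
       ((-(X - 1)^2 + Y * (Y - X)) / X + ((X - Y) / X) * (Y * Sig (Y / X))
          = -((X - 1)^2 / X + (Y - X)^2 * Y / X^2) ↔ Y = X)) := by
  intro X Y hX hY
  have hX0 : X ≠ 0 := ne_of_gt hX
  have hr : 0 < Y / X := div_pos hY hX
  have hkey : X ≠ Y → ((X - Y) / X) * (Y * Sig (Y / X) - Y^2 / X) < 0 := by
    intro hne
    have hrw : Y^2 / X = Y * (Y / X) := by field_simp
    rcases lt_or_gt_of_ne hne with h | h
    · -- X < Y, so Y/X > 1, Sig(Y/X) > Y/X, G < 0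
      have h1 : 1 < Y / X := (one_lt_div hX).mpr h
      have hs : Y / X < Sig (Y / X) := hgt _ h1
      have hG : (X - Y) / X < 0 := div_neg_of_neg_of_pos (by linarith) hX
      have hterm : 0 < Y * Sig (Y / X) - Y^2 / X := by
        rw [hrw]
        nlinarith
      exact mul_neg_of_neg_of_pos hG hterm
    · -- Y < X, Y/X < 1, Sig(Y/X) < Y/X, G > 0
      have h1 : Y / X < 1 := (div_lt_one hX).mpr h
      have hs : Sig (Y / X) < Y / X := hlt _ hr h1
      have hG : 0 < (X - Y) / X := div_pos (by linarith) hX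
      have hterm : Y * Sig (Y / X) - Y^2 / X < 0 := by
        rw [hrw]
        nlinarith
      exact mul_neg_of_pos_of_neg hG hterm
  have hid : (-(X - 1)^2 + Y * (Y - X)) / X + ((X - Y) / X) * (Y * Sig (Y / X))
      = -((X - 1)^2 / X + (Y - X)^2 * Y / X^2)
        + ((X - Y) / X) * (Y * Sig (Y / X) - Y^2 / X) := by
    field_simp
    ring
  refine ⟨hkey, ?_, ?_⟩
  · rcases eq_or_ne X Y with h | h
    · rw [hid, h]
      simp
    · have := hkey h
      rw [hid]; linarith
  · constructor
    · intro heq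
      by_contra hne
      have := hkey (Ne.symm hne)
      rw [hid] at heq
      linarith
    · intro h
      rw [hid, h]
      simp
end

section
/- Let L(X,Y) = (-(X-1)² + Y(Y-X))/X and G(X,Y) = (X-Y)/X. Then both L(X,Y) + G(X,Y) > 0 and G(X,Y) > 0 hold simultaneously if and only if (X,Y) belongs to the set S₊ = {(X,Y) ∈ (0,∞)² : 0 < Y < 1 and ((3-Y) - √5(1-Y))/2 < X < ((3-Y) + √5(1-Y))/2}. -/
/-!
Over the common denominator `X > 0`, `G > 0` says `Y < X` and `L + G > 0` says that the
quadratic `-(X - 1)² + Y (Y - X) + (X - Y)` in `X` is positive. Its discriminant is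
`5 (1 - Y)²`, so it is positive exactly strictly between the roots
`r± = ((3 - Y) ± √5 (1 - Y)) / 2`. Since `r± - Y = (3 ± √5)(1 - Y) / 2` and `3 ± √5 > 0`,
both roots exceed `Y` when `Y < 1` (so `Y < X` is automatic between them), and both are at
most `Y` when `Y ≥ 1` (so no `X > Y` lies between them).
-/

lemma neg_sq_add_mul_add_sub_eq_neg_mul_roots (X Y : ℝ) :
    -(X - 1) ^ 2 + Y * (Y - X) + (X - Y) =
      -((X - ((3 - Y) - √5 * (1 - Y)) / 2) * (X - ((3 - Y) + √5 * (1 - Y)) / 2)) := by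
  linear_combination -(1 - Y) ^ 2 / 4 * Real.sq_sqrt (show (0 : ℝ) ≤ 5 by norm_num)

lemma lt_half_three_sub_add_mul_one_sub_iff {c Y : ℝ} (hc : 0 < 3 + c) :
    Y < ((3 - Y) + c * (1 - Y)) / 2 ↔ Y < 1 := by
  rw [← sub_pos, show ((3 - Y) + c * (1 - Y)) / 2 - Y = (3 + c) * (1 - Y) / 2 by ring,
    div_pos_iff_of_pos_right two_pos, mul_pos_iff_of_pos_left hc, sub_pos]

theorem stmt_5_general (X Y : ℝ) (hX : 0 < X) :
    ((-(X - 1)^2 + Y * (Y - X)) / X + (X - Y) / X > 0 ∧ (X - Y) / X > 0)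
    ↔ (Y < 1 ∧ ((3 - Y) - Real.sqrt 5 * (1 - Y)) / 2 < X
             ∧ X < ((3 - Y) + Real.sqrt 5 * (1 - Y)) / 2) := by
  have hsqrt5 : √5 < 3 := by rw [Real.sqrt_lt' three_pos]; norm_num
  have hlower := lt_half_three_sub_add_mul_one_sub_iff (c := -√5) (Y := Y) (by linarith)
  have hupper := lt_half_three_sub_add_mul_one_sub_iff (c := √5) (Y := Y) (by positivity)
  rw [neg_mul, ← sub_eq_add_neg] at hlower
  rw [← add_div, gt_iff_lt, gt_iff_lt, div_pos_iff_of_pos_right hX,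
    div_pos_iff_of_pos_right hX, sub_pos, neg_sq_add_mul_add_sub_eq_neg_mul_roots, neg_pos]
  constructor
  · rintro ⟨hneg, hYX⟩
    have hY : Y < 1 := by
      by_contra hY
      refine hneg.not_gt (mul_pos ?_ ?_) <;> rw [sub_pos]
      exacts [(not_lt.1 (mt hlower.1 hY)).trans_lt hYX, (not_lt.1 (mt hupper.1 hY)).trans_lt hYX]
    have hroots_le : ((3 - Y) - √5 * (1 - Y)) / 2 ≤ ((3 - Y) + √5 * (1 - Y)) / 2 := by
      have := mul_nonneg (Real.sqrt_nonneg 5) (sub_nonneg.2 hY.le)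
      linarith
    exact ⟨hY, (sub_mul_sub_neg_iff X hroots_le).1 hneg⟩
  · rintro ⟨hY, hbetween⟩
    exact ⟨(sub_mul_sub_neg_iff X (hbetween.1.trans hbetween.2).le).2 hbetween,
      (hlower.2 hY).trans hbetween.1⟩

theorem stmt_5 (X Y : ℝ) (hX : 0 < X) (hY : 0 < Y) :
    ((-(X - 1)^2 + Y * (Y - X)) / X + (X - Y) / X > 0 ∧ (X - Y) / X > 0)
    ↔ (Y < 1 ∧ ((3 - Y) - Real.sqrt 5 * (1 - Y)) / 2 < X
             ∧ X < ((3 - Y) + Real.sqrt 5 * (1 - Y)) / 2) :=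
  stmt_5_general X Y hX
end

section
/- Let Θ : (0,∞) → (0,∞) be C¹ with Θ'(s) > 0 for all s > 0, Θ(1) = 1, Θ'(1) < 1, (Θ(s) - s)(s - 1) < 0 for all s ≠ 1, Θ(s) → 0 as s → 0⁺ and Θ(s) → ∞ as s → ∞. Fix s₀⁻ ∈ (0,1) and define Ψ(s) = exp(∫_{s₀⁻}^s 1/(τ - Θ(τ)) dτ) for s ∈ (0,1). Then Ψ is strictly decreasing on (0,1) and Ψ(s) → 0 as s → 1⁻. -/
/-!
On `(0, 1)` the sign condition puts `Θ τ` above `τ`, and monotonicity of `Θ` together with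
`Θ 1 = 1` puts it below `1`. Hence the integrand `(τ - Θ τ)⁻¹` is negative, so `Ψ` is strictly
decreasing, and it is at most `-(1 - τ)⁻¹`, whose integral from `s₀` to `s` is
`log ((1 - s) / (1 - s₀))`. Therefore `0 < Ψ s ≤ (1 - s) / (1 - s₀)`, which tends to `0`.
-/

open Real Filter Set
open scoped Topology

theorem strictAntiOn_integral_of_neg {f : ℝ → ℝ} {I : Set ℝ} (hI : I.OrdConnected)
    (hf : ContinuousOn f I) (hneg : ∀ x ∈ I, f x < 0) {a : ℝ} (ha : a ∈ I) :
    StrictAntiOn (fun s => ∫ τ in a..s, f τ) I := by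
  have hint : ∀ x ∈ I, ∀ y ∈ I, IntervalIntegrable f MeasureTheory.volume x y :=
    fun x hx y hy => (hf.mono (hI.uIcc_subset hx hy)).intervalIntegrable
  intro x hx y hy hxy
  have hpos : 0 < ∫ τ in x..y, -f τ :=
    intervalIntegral.intervalIntegral_pos_of_pos_on (hint x hx y hy).neg
      (fun τ hτ => neg_pos.2 (hneg τ (hI.out hx hy (Ioo_subset_Icc_self hτ)))) hxy
  rw [intervalIntegral.integral_neg,
    ← intervalIntegral.integral_interval_sub_left (hint a ha y hy) (hint a ha x hx)] at hpos
  simp only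
  linarith

theorem integral_inv_one_sub {a b : ℝ} (ha : a < 1) (hb : b < 1) :
    ∫ τ in a..b, (1 - τ)⁻¹ = log (1 - a) - log (1 - b) := by
  rw [intervalIntegral.integral_comp_sub_left (fun x => x⁻¹),
    integral_inv (notMem_uIcc_of_lt (by linarith) (by linarith)), log_div] <;> linarith

theorem exp_integral_le_of_le_neg_inv_one_sub {f : ℝ → ℝ} {a s : ℝ} (has : a ≤ s) (hs : s < 1)
    (hf : IntervalIntegrable f MeasureTheory.volume a s)
    (hle : ∀ τ ∈ Icc a s, f τ ≤ -(1 - τ)⁻¹) :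
    exp (∫ τ in a..s, f τ) ≤ (1 - s) / (1 - a) := by
  have hcont : ContinuousOn (fun τ : ℝ => -(1 - τ)⁻¹) (Icc a s) :=
    ((continuousOn_const.sub continuousOn_id).inv₀
      fun τ hτ => sub_ne_zero.2 (hτ.2.trans_lt hs).ne').neg
  calc exp (∫ τ in a..s, f τ) ≤ exp (∫ τ in a..s, -(1 - τ)⁻¹) :=
        exp_le_exp.2 (intervalIntegral.integral_mono_on has hf
          (hcont.intervalIntegrable_of_Icc has) hle)
    _ = (1 - s) / (1 - a) := by
        rw [intervalIntegral.integral_neg, integral_inv_one_sub (has.trans_lt hs) hs, neg_sub,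
          exp_sub, exp_log (by linarith), exp_log (by linarith)]

theorem tendsto_exp_integral_nhdsLT_one {f : ℝ → ℝ} {a : ℝ} (ha : a < 1)
    (hf : ∀ s ∈ Ico a 1, IntervalIntegrable f MeasureTheory.volume a s)
    (hle : ∀ τ ∈ Ico a 1, f τ ≤ -(1 - τ)⁻¹) :
    Tendsto (fun s => exp (∫ τ in a..s, f τ)) (𝓝[<] 1) (𝓝 0) := by
  have hupper : Tendsto (fun s : ℝ => (1 - s) / (1 - a)) (𝓝[<] 1) (𝓝 0) := by
    have : Continuous fun s : ℝ => (1 - s) / (1 - a) := by fun_prop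
    simpa using (this.tendsto 1).mono_left nhdsWithin_le_nhds
  refine tendsto_of_tendsto_of_tendsto_of_le_of_le' tendsto_const_nhds hupper
    (Eventually.of_forall fun s => (exp_pos _).le) ?_
  filter_upwards [Ico_mem_nhdsLT ha] with s hs
  exact exp_integral_le_of_le_neg_inv_one_sub hs.1 hs.2 (hf s hs)
    fun τ hτ => hle τ ⟨hτ.1, hτ.2.trans_lt hs.2⟩

namespace Contractor

variable {Θ dΘ : ℝ → ℝ}

theorem lt_apply (hcontr : ∀ s, 0 < s → s ≠ 1 → (Θ s - s) * (s - 1) < 0) {τ : ℝ}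
    (hτ : τ ∈ Ioo 0 1) : τ < Θ τ := by
  have := hcontr τ hτ.1 hτ.2.ne
  nlinarith [hτ.2]

theorem apply_lt_one (hderiv : ∀ s, 0 < s → HasDerivAt Θ (dΘ s) s)
    (hdpos : ∀ s, 0 < s → 0 < dΘ s) (hone : Θ 1 = 1) {τ : ℝ} (hτ : τ ∈ Ioo 0 1) : Θ τ < 1 := by
  have hmono : StrictMonoOn Θ (Ioi 0) :=
    strictMonoOn_of_deriv_pos (convex_Ioi 0)
      (fun x hx => (hderiv x hx).continuousAt.continuousWithinAt)
      fun x hx => by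
        rw [interior_Ioi] at hx
        exact (hderiv x hx).deriv ▸ hdpos x hx
  simpa [hone] using hmono hτ.1 (zero_lt_one' ℝ) hτ.2

end Contractor

theorem stmt_6_general (Θ dΘ : ℝ → ℝ) (s₀ : ℝ) (hs₀ : s₀ ∈ Set.Ioo (0 : ℝ) 1)
    (hderiv : ∀ s, 0 < s → HasDerivAt Θ (dΘ s) s)
    (hdpos : ∀ s, 0 < s → 0 < dΘ s)
    (hone : Θ 1 = 1)
    (hcontr : ∀ s, 0 < s → s ≠ 1 → (Θ s - s) * (s - 1) < 0) :
    StrictAntiOn (fun s => Real.exp (∫ τ in s₀..s, (τ - Θ τ)⁻¹)) (Set.Ioo (0 : ℝ) 1) ∧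
    Filter.Tendsto (fun s => Real.exp (∫ τ in s₀..s, (τ - Θ τ)⁻¹))
      (nhdsWithin 1 (Set.Iio 1)) (nhds 0) := by
  have hneg : ∀ τ ∈ Ioo (0 : ℝ) 1, τ - Θ τ < 0 := fun τ hτ =>
    sub_neg.2 (Contractor.lt_apply hcontr hτ)
  have hcont : ContinuousOn (fun τ => (τ - Θ τ)⁻¹) (Ioo 0 1) :=
    (continuousOn_id.sub fun x hx => (hderiv x hx.1).continuousAt.continuousWithinAt).inv₀
      fun τ hτ => (hneg τ hτ).ne
  have hsub : Ico s₀ 1 ⊆ Ioo 0 1 := fun τ hτ => ⟨hs₀.1.trans_le hτ.1, hτ.2⟩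
  refine ⟨exp_strictMono.comp_strictAntiOn (strictAntiOn_integral_of_neg ordConnected_Ioo hcont
    (fun τ hτ => inv_lt_zero.2 (hneg τ hτ)) hs₀), ?_⟩
  refine tendsto_exp_integral_nhdsLT_one hs₀.2
    (fun s hs => (hcont.mono (ordConnected_Ioo.uIcc_subset hs₀ (hsub hs))).intervalIntegrable)
    fun τ hτ => ?_
  have hΘ_lt_one := Contractor.apply_lt_one hderiv hdpos hone (hsub hτ)
  rw [← neg_sub (Θ τ), inv_neg, neg_le_neg_iff]
  exact inv_anti₀ (sub_pos.2 (Contractor.lt_apply hcontr (hsub hτ))) (by linarith)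

theorem stmt_6 (Θ dΘ : ℝ → ℝ) (s₀ : ℝ) (hs₀ : s₀ ∈ Set.Ioo (0 : ℝ) 1)
    (hpos : ∀ s, 0 < s → 0 < Θ s)
    (hderiv : ∀ s, 0 < s → HasDerivAt Θ (dΘ s) s)
    (hdpos : ∀ s, 0 < s → 0 < dΘ s)
    (hone : Θ 1 = 1)
    (hd1 : dΘ 1 < 1)
    (hcontr : ∀ s, 0 < s → s ≠ 1 → (Θ s - s) * (s - 1) < 0)
    (hlim0 : Filter.Tendsto Θ (nhdsWithin 0 (Set.Ioi 0)) (nhds 0))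
    (hlimtop : Filter.Tendsto Θ Filter.atTop Filter.atTop) :
    StrictAntiOn (fun s => Real.exp (∫ τ in s₀..s, (τ - Θ τ)⁻¹)) (Set.Ioo (0 : ℝ) 1) ∧
    Filter.Tendsto (fun s => Real.exp (∫ τ in s₀..s, (τ - Θ τ)⁻¹))
      (nhdsWithin 1 (Set.Iio 1)) (nhds 0) :=
  stmt_6_general Θ dΘ s₀ hs₀ hderiv hdpos hone hcontr
end

section
/- Let Θ satisfy the contractor conditions (C¹, strictly increasing, Θ(1) = 1, Θ'(1) < 1, (Θ(s)-s)(s-1) < 0 for s ≠ 1, Θ(0⁺) = 0, Θ(∞) = ∞), and let Ψ be defined by Ψ'(s)/Ψ(s) = 1/(s - Θ(s)) on (0,∞)\{1} with Ψ(1) = 0 (continuous extension). Then Ψ is strictly convex on (0,∞)\{1}; in fact Ψ''(s) = Θ'(s)·(Ψ'(s))²/Ψ(s) > 0 for all s ≠ 1. -/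
open Set

theorem stmt_7 (Θ dΘ Ψ Ψ' Ψ'' : ℝ → ℝ)
    (hΘderiv : ∀ s, 0 < s → HasDerivAt Θ (dΘ s) s)
    (hΘdpos : ∀ s, 0 < s → 0 < dΘ s)
    (hΘone : Θ 1 = 1)
    (hΘd1 : dΘ 1 < 1)
    (hΘcontr : ∀ s, 0 < s → s ≠ 1 → (Θ s - s) * (s - 1) < 0)
    (hΨ1 : Ψ 1 = 0)
    (hΨpos : ∀ s, 0 < s → s ≠ 1 → 0 < Ψ s)
    (hΨderiv : ∀ s, 0 < s → s ≠ 1 → HasDerivAt Ψ (Ψ' s) s)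
    (hΨderiv2 : ∀ s, 0 < s → s ≠ 1 → HasDerivAt Ψ' (Ψ'' s) s)
    (hODE : ∀ s, 0 < s → s ≠ 1 → Ψ' s * (s - Θ s) = Ψ s) :
    (∀ s, 0 < s → s ≠ 1 → Ψ'' s = dΘ s * (Ψ' s)^2 / Ψ s ∧ 0 < Ψ'' s) ∧
    StrictConvexOn ℝ (Set.Ioo (0 : ℝ) 1) Ψ ∧ StrictConvexOn ℝ (Set.Ioi (1 : ℝ)) Ψ := by
  have key : ∀ s, 0 < s → s ≠ 1 → Ψ'' s = dΘ s * (Ψ' s)^2 / Ψ s ∧ 0 < Ψ'' s := by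
    intro s hs hs1
    have hΨs := hΨpos s hs hs1
    have hne : s - Θ s ≠ 0 := by
      intro h
      have := hODE s hs hs1
      rw [h, mul_zero] at this
      exact (lt_irrefl _ (this ▸ hΨs)).elim
    have hΨ'ne : Ψ' s ≠ 0 := by
      intro h
      have := hODE s hs hs1
      rw [h, zero_mul] at this
      exact (lt_irrefl _ (this ▸ hΨs)).elim
    -- differentiate the ODE
    have hopen : {x : ℝ | 0 < x ∧ x ≠ 1} ∈ nhds s := by
      have : IsOpen {x : ℝ | 0 < x ∧ x ≠ 1} :=
        (isOpen_lt continuous_const continuous_id).inter (isOpen_ne)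
      exact this.mem_nhds ⟨hs, hs1⟩
    have hev : (fun x => Ψ' x * (x - Θ x)) =ᶠ[nhds s] Ψ := by
      filter_upwards [hopen] with x hx
      exact hODE x hx.1 hx.2
    have hL : HasDerivAt (fun x => Ψ' x * (x - Θ x))
        (Ψ'' s * (s - Θ s) + Ψ' s * (1 - dΘ s)) s :=
      (hΨderiv2 s hs hs1).mul ((hasDerivAt_id s).sub (hΘderiv s hs))
    have hR : HasDerivAt (fun x => Ψ' x * (x - Θ x)) (Ψ' s) s :=
      (hΨderiv s hs hs1).congr_of_eventuallyEq hev
    have heq : Ψ'' s * (s - Θ s) + Ψ' s * (1 - dΘ s) = Ψ' s := hL.unique hR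
    have hΨ''eq : Ψ'' s * (s - Θ s) = Ψ' s * dΘ s := by ring_nf; ring_nf at heq; linarith
    have hΨeq : Ψ' s * (s - Θ s) = Ψ s := hODE s hs hs1
    have h1 : Ψ'' s = Ψ' s * dΘ s / (s - Θ s) := (eq_div_iff hne).mpr hΨ''eq
    constructor
    · rw [h1, ← hΨeq]
      field_simp
    · have h2 : Ψ'' s = dΘ s * Ψ s / (s - Θ s)^2 := by
        rw [h1, ← hΨeq]; field_simp
      rw [h2]
      have hd := hΘdpos s hs
      positivity
  refine ⟨key, ?_, ?_⟩
  · apply strictConvexOn_of_deriv2_pos (convex_Ioo 0 1)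
    · intro x hx
      exact ((hΨderiv x hx.1 (ne_of_lt hx.2)).continuousAt).continuousWithinAt
    · intro x hx
      rw [interior_Ioo] at hx
      have hx0 := hx.1
      have hx1 : x ≠ 1 := ne_of_lt hx.2
      have hev : deriv Ψ =ᶠ[nhds x] Ψ' := by
        filter_upwards [isOpen_Ioo.mem_nhds hx] with y hy
        exact (hΨderiv y hy.1 (ne_of_lt hy.2)).deriv
      have : deriv (deriv Ψ) x = Ψ'' x := by
        rw [hev.deriv_eq]
        exact (hΨderiv2 x hx0 hx1).deriv
      simp only [Function.iterate_succ, Function.iterate_zero, Function.comp_apply, id]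
      rw [show deriv (deriv Ψ) x = Ψ'' x from this]
      exact (key x hx0 hx1).2
  · apply strictConvexOn_of_deriv2_pos (convex_Ioi 1)
    · intro x hx
      exact ((hΨderiv x (lt_trans one_pos hx) (ne_of_gt hx)).continuousAt).continuousWithinAt
    · intro x hx
      rw [interior_Ioi] at hx
      have hx0 : (0:ℝ) < x := lt_trans one_pos hx
      have hx1 : x ≠ 1 := ne_of_gt hx
      have hev : deriv Ψ =ᶠ[nhds x] Ψ' := by
        filter_upwards [isOpen_Ioi.mem_nhds hx] with y hy
        exact (hΨderiv y (lt_trans one_pos hy) (ne_of_gt hy)).deriv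
      have : deriv (deriv Ψ) x = Ψ'' x := by
        rw [hev.deriv_eq]
        exact (hΨderiv2 x hx0 hx1).deriv
      simp only [Function.iterate_succ, Function.iterate_zero, Function.comp_apply, id]
      rw [show deriv (deriv Ψ) x = Ψ'' x from this]
      exact (key x hx0 hx1).2
end

section
/- The function Θ(s) = s·ln(s)/(s-1), extended by Θ(1) = 1, satisfies all contractor conditions: it is strictly increasing on (0,∞), Θ(1) = 1, Θ'(1) = 1/2 < 1, (Θ(s) - s)(s - 1) < 0 for all s ≠ 1, Θ(s) → 0 as s → 0⁺, and Θ(s) → ∞ as s → ∞. -/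
/-!
Away from `1`, `Θ'(s) = Ψ(s) / (s - 1)²`, which is positive since `log s < s - 1`; at `1` the
difference quotient is `(s log s - (s - 1)) / (s - 1)²`, whose limit `1/2` follows from
L'Hôpital's rule because `log s / (s - 1) → 1`. The sign condition is the identity
`(Θ s - s)(s - 1) = s (log s - (s - 1))`, and for `s > 1` one has `Θ s ≥ log s`.
-/

open Real Filter Set Topology

lemma tendsto_log_div_sub_one : Tendsto (fun s => log s / (s - 1)) (𝓝[≠] 1) (𝓝 1) := by
  have h := (hasDerivAt_log one_ne_zero).tendsto_slope
  rw [inv_one] at h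
  refine h.congr' (eventually_mem_nhdsWithin.mono fun s (hs : s ≠ 1) => ?_)
  rw [slope_def_field, log_one, sub_zero]

noncomputable def volterraContractor (s : ℝ) : ℝ :=
  if s = 1 then 1 else s * log s / (s - 1)

namespace volterraContractor

lemma of_ne_one {s : ℝ} (hs : s ≠ 1) : volterraContractor s = s * log s / (s - 1) := if_neg hs

lemma sub_mul_sub_one {s : ℝ} (hs : s ≠ 1) :
    (volterraContractor s - s) * (s - 1) = s * (log s - (s - 1)) := by
  have : s - 1 ≠ 0 := sub_ne_zero.mpr hs
  rw [of_ne_one hs]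
  field_simp

lemma sub_mul_sub_one_neg {s : ℝ} (hs0 : 0 < s) (hs1 : s ≠ 1) :
    (volterraContractor s - s) * (s - 1) < 0 := by
  rw [sub_mul_sub_one hs1]
  exact mul_neg_of_pos_of_neg hs0 (by linarith [log_lt_sub_one_of_pos hs0 hs1])

lemma hasDerivAt_of_ne_one {x : ℝ} (hx0 : x ≠ 0) (hx1 : x ≠ 1) :
    HasDerivAt volterraContractor ((x - 1 - log x) / (x - 1) ^ 2) x := by
  have hx1' : x - 1 ≠ 0 := sub_ne_zero.mpr hx1
  have hquot := (hasDerivAt_mul_log hx0).fun_div ((hasDerivAt_id' (x := x)).sub_const 1) hx1'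
  refine (hquot.congr_deriv ?_).congr_of_eventuallyEq ?_
  · field_simp
    ring
  · filter_upwards [isOpen_ne.mem_nhds hx1] with s hs
    exact of_ne_one hs

lemma tendsto_mul_log_sub_div_sq :
    Tendsto (fun s => (s * log s - (s - 1)) / (s - 1) ^ 2) (𝓝[≠] 1) (𝓝 (1 / 2)) := by
  have hpos : ∀ᶠ s in 𝓝[≠] (1 : ℝ), 0 < s :=
    nhdsWithin_le_nhds (lt_mem_nhds one_pos)
  refine HasDerivAt.lhopital_zero_nhdsNE (f' := log) (g' := fun s => 2 * (s - 1)) ?_ ?_ ?_ ?_ ?_ ?_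
  · filter_upwards [hpos] with s hs
    simpa using (hasDerivAt_mul_log hs.ne').fun_sub ((hasDerivAt_id' (x := s)).sub_const 1)
  · filter_upwards with s
    simpa using ((hasDerivAt_id' (x := s)).sub_const 1).fun_pow 2
  · filter_upwards [eventually_mem_nhdsWithin] with s (hs : s ≠ 1)
    have : s - 1 ≠ 0 := sub_ne_zero.mpr hs
    positivity
  · have h : ContinuousAt (fun s => s * log s - (s - 1)) 1 :=
      (continuous_mul_log.sub (continuous_id.sub continuous_const)).continuousAt
    simpa using h.tendsto.mono_left nhdsWithin_le_nhds
  · have h : ContinuousAt (fun s : ℝ => (s - 1) ^ 2) 1 := by fun_prop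
    simpa using h.tendsto.mono_left nhdsWithin_le_nhds
  · have h := tendsto_log_div_sub_one.const_mul (1 / 2)
    rw [mul_one] at h
    refine h.congr' (Eventually.of_forall fun s => ?_)
    show _ = log s / (2 * (s - 1))
    rw [mul_comm 2, ← div_div]
    ring

lemma hasDerivAt_one : HasDerivAt volterraContractor (1 / 2) 1 := by
  rw [hasDerivAt_iff_tendsto_slope]
  refine tendsto_mul_log_sub_div_sq.congr' (eventually_mem_nhdsWithin.mono fun s (hs : s ≠ 1) => ?_)
  have : s - 1 ≠ 0 := sub_ne_zero.mpr hs
  rw [slope_def_field, of_ne_one hs, volterraContractor, if_pos rfl]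
  field_simp

lemma exists_hasDerivAt_pos {x : ℝ} (hx : 0 < x) : ∃ d, 0 < d ∧ HasDerivAt volterraContractor d x := by
  rcases eq_or_ne x 1 with rfl | hx1
  · exact ⟨1 / 2, by norm_num, hasDerivAt_one⟩
  · refine ⟨_, div_pos ?_ (pow_two_pos_of_ne_zero (sub_ne_zero.mpr hx1)),
      hasDerivAt_of_ne_one hx.ne' hx1⟩
    linarith [log_lt_sub_one_of_pos hx hx1]

lemma strictMonoOn : StrictMonoOn volterraContractor (Ioi 0) := by
  refine strictMonoOn_of_deriv_pos (convex_Ioi 0) (fun x hx => ?_) (fun x hx => ?_)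
  · obtain ⟨d, -, hd⟩ := exists_hasDerivAt_pos hx
    exact hd.continuousAt.continuousWithinAt
  · rw [interior_Ioi] at hx
    obtain ⟨d, hd_pos, hd⟩ := exists_hasDerivAt_pos hx
    rwa [hd.deriv]

lemma tendsto_nhdsGT_zero : Tendsto volterraContractor (𝓝[>] 0) (𝓝 0) := by
  have h : ContinuousAt (fun s => s * log s / (s - 1)) 0 :=
    continuous_mul_log.continuousAt.div (by fun_prop) (by norm_num)
  refine (by simpa using h.tendsto.mono_left nhdsWithin_le_nhds :
    Tendsto (fun s => s * log s / (s - 1)) (𝓝[>] 0) (𝓝 0)).congr' ?_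
  filter_upwards [Ioo_mem_nhdsGT (zero_lt_one' ℝ)] with s hs
  exact (of_ne_one hs.2.ne).symm

lemma log_le_of_one_lt {s : ℝ} (hs : 1 < s) : log s ≤ volterraContractor s := by
  rw [of_ne_one hs.ne', le_div_iff₀ (sub_pos.mpr hs)]
  nlinarith [log_nonneg hs.le]


lemma tendsto_atTop : Tendsto volterraContractor atTop atTop :=
  tendsto_atTop_mono' _ ((eventually_gt_atTop 1).mono fun _ => log_le_of_one_lt) tendsto_log_atTop

end volterraContractor

open volterraContractor in
theorem stmt_9 :
    let Θ : ℝ → ℝ := fun s => if s = 1 then 1 else s * Real.log s / (s - 1)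
    StrictMonoOn Θ (Set.Ioi (0 : ℝ)) ∧
    Θ 1 = 1 ∧
    (HasDerivAt Θ (1/2) 1 ∧ (1:ℝ)/2 < 1) ∧
    (∀ s : ℝ, 0 < s → s ≠ 1 → (Θ s - s) * (s - 1) < 0) ∧
    Filter.Tendsto Θ (nhdsWithin 0 (Set.Ioi 0)) (nhds 0) ∧
    Filter.Tendsto Θ Filter.atTop Filter.atTop :=
  ⟨strictMonoOn, if_pos rfl, ⟨hasDerivAt_one, by norm_num⟩, fun _ => sub_mul_sub_one_neg,
    tendsto_nhdsGT_zero, tendsto_atTop⟩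
end

section
/- Let a, b be real numbers with (a,b) ≠ (0,0) and suppose that b ≥ 0 implies a < 0. Define ω = 1 - (a + √(a² + b²))/b when b ≠ 0 and ω = 1 when b = 0. Then, if b ≠ 0, a + b(ω - 1) = -√(a² + b²) < 0; moreover ω > 0 holds whenever b < 0 or (b > 0 and a < 0). -/
theorem stmt_14 (a b : ℝ) (hne : (a, b) ≠ ((0 : ℝ), (0 : ℝ)))
    (hclf : 0 ≤ b → a < 0) :
    let ω : ℝ := if b = 0 then 1 else 1 - (a + Real.sqrt (a^2 + b^2)) / b
    (b ≠ 0 → a + b * (ω - 1) = -Real.sqrt (a^2 + b^2) ∧ a + b * (ω - 1) < 0) ∧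
    ((b < 0 ∨ (0 < b ∧ a < 0)) → 0 < ω) := by
  intro ω
  have hpos : 0 < a^2 + b^2 := by
    rcases eq_or_ne a 0 with ha | ha
    · have hb : b ≠ 0 := by
        intro hb; exact hne (by simp [ha, hb])
      positivity
    · positivity
  have hsqrt : 0 < Real.sqrt (a^2 + b^2) := Real.sqrt_pos.mpr hpos
  have habs : -a ≤ Real.sqrt (a^2 + b^2) := by
    have := Real.sqrt_le_sqrt (show a^2 ≤ a^2 + b^2 by nlinarith)
    have h2 : Real.sqrt (a^2) = |a| := by
      rw [Real.sqrt_sq_eq_abs]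
    nlinarith [abs_nonneg a, neg_abs_le a, this, h2]
  constructor
  · intro hb
    have hω : ω = 1 - (a + Real.sqrt (a^2 + b^2)) / b := by simp [ω, hb]
    have key : a + b * (ω - 1) = -Real.sqrt (a^2 + b^2) := by
      rw [hω]; field_simp; ring
    exact ⟨key, by rw [key]; linarith⟩
  · rintro (hb | ⟨hb, ha⟩)
    · have hω : ω = 1 - (a + Real.sqrt (a^2 + b^2)) / b := by
        simp [ω, ne_of_lt hb]
      have h1 : 0 ≤ a + Real.sqrt (a^2 + b^2) := by linarith
      have h2 : (a + Real.sqrt (a^2 + b^2)) / b ≤ 0 :=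
        div_nonpos_of_nonneg_of_nonpos h1 (le_of_lt hb)
      rw [hω]; linarith
    · have hω : ω = 1 - (a + Real.sqrt (a^2 + b^2)) / b := by
        simp [ω, ne_of_gt hb]
      have hlt : Real.sqrt (a^2 + b^2) < b - a := by
        have : Real.sqrt (a^2 + b^2) ≤ Real.sqrt ((b - a)^2) := by
          apply Real.sqrt_le_sqrt; nlinarith
        rw [Real.sqrt_sq_eq_abs, abs_of_pos (by linarith)] at this
        rcases lt_or_eq_of_le this with h | h
        · exact h
        · exfalso
          have := Real.sq_sqrt (le_of_lt hpos)
          nlinarith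
      have : (a + Real.sqrt (a^2 + b^2)) / b < 1 := by
        rw [div_lt_one hb]; linarith
      rw [hω]; linarith
end
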